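/- For fixed label distribution p* ∈ Δ_J°, the conditional SD-risk r_{β,λ}(p*, p) = (1/A) Σ_j [p_j^{1+β} − ((1+β)/B) p_j^B (p_j*)^A + (A/B)(p_j*)^{1+β}] over p ∈ Δ_J is nonnegative and is uniquely minimized at p = p*. -/

import Mathlib

/-!
Each summand of the risk is, up to the factor `(A + B) / B`, the gap in the weighted AM-GM
inequality for the points `p_j ^ (A + B)`, `p*_j ^ (A + B)` with weights `B / (A + B)`,
`A / (A + B)`. Since `1 + β = A + B`, every summand is nonnegative and vanishes exactly when
`p_j = p*_j`.
-/

open Finset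

/-- The conditional SD-risk `r_{β,λ}(p*, p)`. -/
noncomputable def condSDRisk (A B beta : ℝ) {J : ℕ} (pstar p : Fin J → ℝ) : ℝ :=
  (1 / A) * ∑ j, (p j ^ (1 + beta)
    - ((1 + beta) / B) * p j ^ B * pstar j ^ A
    + (A / B) * pstar j ^ (1 + beta))

/-- The summand of `condSDRisk` at `p*_j = a`, `p_j = b`, with `1 + β` written as `A + B`. -/
noncomputable def youngGap (A B a b : ℝ) : ℝ :=
  b ^ (A + B) - ((A + B) / B) * b ^ B * a ^ A + (A / B) * a ^ (A + B)

section youngGap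

variable {A B a b : ℝ}

lemma youngGap_eq_mul_amgm_gap (ha : 0 ≤ a) (hb : 0 ≤ b) (hA : 0 ≤ A) (hB : 0 < B) :
    youngGap A B a b = ((A + B) / B) *
      (B / (A + B) * b ^ (A + B) + A / (A + B) * a ^ (A + B)
        - (b ^ (A + B)) ^ (B / (A + B)) * (a ^ (A + B)) ^ (A / (A + B))) := by
  have hS : A + B ≠ 0 := by positivity
  rw [← Real.rpow_mul hb, ← Real.rpow_mul ha, mul_div_cancel₀ _ hS, mul_div_cancel₀ _ hS,
    youngGap]
  field_simp
  ring

lemma youngGap_nonneg (ha : 0 ≤ a) (hb : 0 ≤ b) (hA : 0 ≤ A) (hB : 0 < B) :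
    0 ≤ youngGap A B a b := by
  rw [youngGap_eq_mul_amgm_gap ha hb hA hB]
  have hS : 0 < A + B := by positivity
  refine mul_nonneg (by positivity) (sub_nonneg.2 ?_)
  exact Real.geom_mean_le_arith_mean2_weighted (by positivity) (by positivity)
    (by positivity) (by positivity) (by field_simp; ring)

lemma youngGap_eq_zero_iff (ha : 0 ≤ a) (hb : 0 ≤ b) (hA : 0 < A) (hB : 0 < B) :
    youngGap A B a b = 0 ↔ b = a := by
  have hS : 0 < A + B := by positivity
  rw [youngGap_eq_mul_amgm_gap ha hb hA.le hB, mul_eq_zero, or_iff_right (by positivity),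
    sub_eq_zero, eq_comm,
    Real.geom_mean_eq_arith_mean2_weighted_iff_of_pos (by positivity) (by positivity)
      (by positivity) (by positivity) (by field_simp; ring),
    Real.rpow_left_inj hb ha hS.ne']

end youngGap

section condSDRisk

variable {A B beta : ℝ} {J : ℕ} {pstar p : Fin J → ℝ}

lemma condSDRisk_eq_sum_youngGap (hAB : 1 + beta = A + B) :
    condSDRisk A B beta pstar p = (1 / A) * ∑ j, youngGap A B (pstar j) (p j) := by
  rw [condSDRisk, hAB]
  rfl

lemma condSDRisk_nonneg (hAB : 1 + beta = A + B) (hA : 0 ≤ A) (hB : 0 < B)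
    (hpstar : ∀ j, 0 ≤ pstar j) (hp : ∀ j, 0 ≤ p j) :
    0 ≤ condSDRisk A B beta pstar p := by
  rw [condSDRisk_eq_sum_youngGap hAB]
  exact mul_nonneg (by positivity)
    (sum_nonneg fun j _ ↦ youngGap_nonneg (hpstar j) (hp j) hA hB)

lemma condSDRisk_eq_zero_iff (hAB : 1 + beta = A + B) (hA : 0 < A) (hB : 0 < B)
    (hpstar : ∀ j, 0 ≤ pstar j) (hp : ∀ j, 0 ≤ p j) :
    condSDRisk A B beta pstar p = 0 ↔ p = pstar := by
  rw [condSDRisk_eq_sum_youngGap hAB, mul_eq_zero, or_iff_right (by positivity),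
    sum_eq_zero_iff_of_nonneg fun j _ ↦ youngGap_nonneg (hpstar j) (hp j) hA.le hB, funext_iff]
  simp only [mem_univ, true_imp_iff, youngGap_eq_zero_iff (hpstar _) (hp _) hA hB]

end condSDRisk

theorem condSDRisk_nonneg_unique_min_general (J : ℕ)
    (beta lam A B : ℝ)
    (hA : A = 1 + lam * (1 - beta)) (hB : B = beta - lam * (1 - beta))
    (hApos : 0 < A) (hBpos : 0 < B)
    (pstar : Fin J → ℝ) (hps : ∀ j, 0 < pstar j) :
    (∀ p : Fin J → ℝ, (∀ j, 0 ≤ p j) → ∑ j, p j = 1 →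
      0 ≤ condSDRisk A B beta pstar p) ∧
    (∀ p : Fin J → ℝ, (∀ j, 0 ≤ p j) → ∑ j, p j = 1 →
      (condSDRisk A B beta pstar p = 0 ↔ p = pstar)) := by
  have hAB : 1 + beta = A + B := by rw [hA, hB]; ring
  have hpstar : ∀ j, 0 ≤ pstar j := fun j ↦ (hps j).le
  exact ⟨fun p hp _ ↦ condSDRisk_nonneg hAB hApos.le hBpos hpstar hp,
    fun p hp _ ↦ condSDRisk_eq_zero_iff hAB hApos hBpos hpstar hp⟩

/-- For a strictly positive label distribution `p*`, the conditional SD-risk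
is nonnegative over the simplex and is uniquely minimized (with value 0) at `p = p*`. -/
theorem condSDRisk_nonneg_unique_min (J : ℕ) (hJ : 2 ≤ J)
    (beta lam A B : ℝ) (hbeta0 : 0 ≤ beta) (hbeta1 : beta ≤ 1)
    (hA : A = 1 + lam * (1 - beta)) (hB : B = beta - lam * (1 - beta))
    (hApos : 0 < A) (hBpos : 0 < B)
    (pstar : Fin J → ℝ) (hps : ∀ j, 0 < pstar j) (hpssum : ∑ j, pstar j = 1) :
    (∀ p : Fin J → ℝ, (∀ j, 0 ≤ p j) → ∑ j, p j = 1 →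
      0 ≤ condSDRisk A B beta pstar p) ∧
    (∀ p : Fin J → ℝ, (∀ j, 0 ≤ p j) → ∑ j, p j = 1 →
      (condSDRisk A B beta pstar p = 0 ↔ p = pstar)) :=
  condSDRisk_nonneg_unique_min_general J beta lam A B hA hB hApos hBpos pstar hps
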